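/- arXiv:1512.09309 — 3 statements merged into one kernel-verified Lean document; each statement's English description precedes it below -/
import Mathlib

section
/- For every integer g ≥ 2, the first subleading Harer–Zagier coefficient satisfies b(g, g−2) = (3/10) · g·(g−1)/(2g−1) · b(g, g−1). -/
/-!
Write `a g = b g (g-1)` and `c g = b g (g-2)`. Since `b g g = 0`, the recurrence at `k = g` and
`k = g - 1` gives first-order recurrences for `a` and for `c` (the latter with a source term in `a`).
The identity `(2g-1) c g = (3/10) g (g-1) a g` holds at `g = 1`, where both sides vanish, and it
propagates because the coefficient of `c g` in the recurrence is `4(6g-3) = 12(2g-1)`.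
-/

def HarerZagierRecurrence (b : ℕ → ℤ → ℚ) : Prop :=
  ∀ g : ℕ, 1 ≤ g → ∀ k : ℤ,
    (4 * (g : ℚ) + 2 * (k : ℚ) + 6) * b (g + 1) k =
      (4 * (g : ℚ) + 2 * (k : ℚ) + 1) * (4 * (g : ℚ) + 2 * (k : ℚ) + 3) *
        ((4 * (g : ℚ) + 2 * (k : ℚ) + 2) * b g k
          + 4 * (4 * (g : ℚ) + 2 * (k : ℚ) - 1) * b g (k - 1))

namespace HarerZagierRecurrence

variable {b : ℕ → ℤ → ℚ} {g : ℕ}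

theorem leading_succ (hrec : HarerZagierRecurrence b) (hg : 1 ≤ g) (hzero : b g g = 0) :
    ((g : ℚ) + 1) * b (g + 1) g =
      2 * (6 * (g : ℚ) - 1) * (6 * (g : ℚ) + 1) * (2 * (g : ℚ) + 1) * b g ((g : ℤ) - 1) := by
  have h := hrec g hg g
  push_cast at h
  rw [hzero] at h
  linear_combination h / 6

theorem subleading_succ (hrec : HarerZagierRecurrence b) (hg : 1 ≤ g) :
    (3 * (g : ℚ) + 2) * b (g + 1) ((g : ℤ) - 1) =
      (6 * (g : ℚ) - 1) * (6 * (g : ℚ) + 1) *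
        (3 * (g : ℚ) * b g ((g : ℤ) - 1) + 6 * (2 * (g : ℚ) - 1) * b g ((g : ℤ) - 2)) := by
  have h := hrec g hg ((g : ℤ) - 1)
  rw [show (g : ℤ) - 1 - 1 = (g : ℤ) - 2 by ring] at h
  push_cast at h
  linear_combination h / 2

theorem subleading_mul_eq (hrec : HarerZagierRecurrence b)
    (hb0 : ∀ g : ℕ, 1 ≤ g → ∀ k : ℤ, (k < 0 ∨ (g : ℤ) - 1 < k) → b g k = 0)
    (hg : 1 ≤ g) :
    (2 * (g : ℚ) - 1) * b g ((g : ℤ) - 2) =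
      3 / 10 * (g : ℚ) * ((g : ℚ) - 1) * b g ((g : ℤ) - 1) := by
  induction g, hg using Nat.le_induction with
  | base =>
    simp [hb0 1 le_rfl (-1) (Or.inl (by norm_num))]
  | succ g hg ih =>
    have ha := hrec.leading_succ hg (hb0 g hg g (Or.inr (by omega)))
    have hc := hrec.subleading_succ hg
    have hpos : (0 : ℚ) < (3 * g + 2) * (g + 1) := by positivity
    rw [show ((g + 1 : ℕ) : ℤ) - 2 = (g : ℤ) - 1 by push_cast; ring,
      show ((g + 1 : ℕ) : ℤ) - 1 = (g : ℤ) by push_cast; ring]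
    push_cast
    refine mul_left_cancel₀ hpos.ne' ?_
    linear_combination ((g : ℚ) + 1) * (2 * g + 1) * hc
      - 3 / 10 * (g : ℚ) * (3 * g + 2) * (g + 1) * ha
      + 6 * ((g : ℚ) + 1) * (2 * g + 1) * (6 * g - 1) * (6 * g + 1) * ih

end HarerZagierRecurrence

theorem harer_zagier_subleading_ratio_general
    (b : ℕ → ℤ → ℚ)
    (hb0 : ∀ g : ℕ, 1 ≤ g → ∀ k : ℤ, (k < 0 ∨ (g : ℤ) - 1 < k) → b g k = 0)
    (hrec : ∀ g : ℕ, 1 ≤ g → ∀ k : ℤ,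
      (4 * (g : ℚ) + 2 * (k : ℚ) + 6) * b (g + 1) k =
        (4 * (g : ℚ) + 2 * (k : ℚ) + 1) * (4 * (g : ℚ) + 2 * (k : ℚ) + 3) *
          ((4 * (g : ℚ) + 2 * (k : ℚ) + 2) * b g k
            + 4 * (4 * (g : ℚ) + 2 * (k : ℚ) - 1) * b g (k - 1))) :
    ∀ g : ℕ, 2 ≤ g →
      b g ((g : ℤ) - 2) =
        (3 / 10 : ℚ) * ((g : ℚ) * ((g : ℚ) - 1) / (2 * (g : ℚ) - 1)) *
          b g ((g : ℤ) - 1) := by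
  intro g hg
  have hodd : (2 * (g : ℚ) - 1) ≠ 0 := by
    have : (2 : ℚ) ≤ g := by exact_mod_cast hg
    linarith
  have h := HarerZagierRecurrence.subleading_mul_eq hrec hb0 (by omega : 1 ≤ g)
  rw [mul_div_assoc', div_mul_eq_mul_div, eq_div_iff hodd]
  linear_combination h

/-- For every `g ≥ 2`, `b g (g-2) = (3/10) * g*(g-1)/(2g-1) * b g (g-1)`. -/
theorem harer_zagier_subleading_ratio
    (b : ℕ → ℤ → ℚ)
    (hb1 : b 1 0 = 1)
    (hb0 : ∀ g : ℕ, 1 ≤ g → ∀ k : ℤ, (k < 0 ∨ (g : ℤ) - 1 < k) → b g k = 0)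
    (hrec : ∀ g : ℕ, 1 ≤ g → ∀ k : ℤ,
      (4 * (g : ℚ) + 2 * (k : ℚ) + 6) * b (g + 1) k =
        (4 * (g : ℚ) + 2 * (k : ℚ) + 1) * (4 * (g : ℚ) + 2 * (k : ℚ) + 3) *
          ((4 * (g : ℚ) + 2 * (k : ℚ) + 2) * b g k
            + 4 * (4 * (g : ℚ) + 2 * (k : ℚ) - 1) * b g (k - 1))) :
    ∀ g : ℕ, 2 ≤ g →
      b g ((g : ℤ) - 2) =
        (3 / 10 : ℚ) * ((g : ℚ) * ((g : ℚ) - 1) / (2 * (g : ℚ) - 1)) *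
          b g ((g : ℤ) - 1) :=
  harer_zagier_subleading_ratio_general b hb0 hrec
end

section
/- For every natural number k and every real λ > 0, the (2k)-th derivative of the function x ↦ −1/(e^x + 1) at λ equals the convergent alternating series Σ_{P=1}^∞ (−1)^P · P^{2k} · e^{−λP}; that is, iteratedDeriv (2k) (fun x => −(Real.exp x + 1)⁻¹) λ = ∑'_{P : ℕ⁺} (−1)^P · (P : ℝ)^{2k} · Real.exp (−λ·P). -/
/-!
For `x > 0` the function `-1/(eˣ + 1)` is the geometric series `∑_{P ≥ 1} (-e^{-x})^P`.
On `(x/2, ∞)` the `P`-th term and all its derivatives are dominated by `C P^m e^{-xP/2}`, which is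
summable, so the series can be differentiated termwise any number of times; each differentiation
multiplies the `P`-th term by `-P`, and `(-P)^{2k} = P^{2k}`.
-/

open Real

lemma summable_pnat_pow_mul_exp_neg_mul (n : ℕ) {c : ℝ} (hc : 0 < c) :
    Summable fun P : ℕ+ => ((P : ℕ) : ℝ) ^ n * exp (-(c * (P : ℕ))) := by
  simpa only [neg_mul] using
    summable_pnat_iff_summable_nat.2 (summable_pow_mul_exp_neg_nat_mul n hc)

lemma summable_pnat_mul_exp_neg_mul {b : ℕ+ → ℝ} {C : ℝ} {n : ℕ}
    (hb : ∀ P, |b P| ≤ C * ((P : ℕ) : ℝ) ^ n) {x : ℝ} (hx : 0 < x) :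
    Summable fun P : ℕ+ => b P * exp (-(x * (P : ℕ))) := by
  refine .of_norm_bounded ((summable_pnat_pow_mul_exp_neg_mul n hx).mul_left C) fun P => ?_
  rw [norm_mul, norm_of_nonneg (exp_nonneg _), ← mul_assoc]
  exact mul_le_mul_of_nonneg_right (hb P) (exp_nonneg _)

lemma hasSum_pnat_neg_one_pow_mul_exp_neg_mul {x : ℝ} (hx : 0 < x) :
    HasSum (fun P : ℕ+ => (-1 : ℝ) ^ (P : ℕ) * exp (-(x * (P : ℕ)))) (-(exp x + 1)⁻¹) := by
  have hr : ‖-exp (-x)‖ < 1 := by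
    rw [norm_neg, norm_of_nonneg (exp_nonneg _), exp_lt_one_iff, neg_lt_zero]
    exact hx
  have hterm (n : ℕ) : (-1 : ℝ) ^ n * exp (-(x * n)) = (-exp (-x)) ^ n := by
    rw [neg_pow (exp (-x)), ← exp_nat_mul, mul_neg, mul_comm x]
  have hsum : -(exp x + 1)⁻¹ + 1 = (1 - -exp (-x))⁻¹ := by
    have h₁ : exp x + 1 ≠ 0 := by positivity
    have h₂ : exp x ≠ 0 := by positivity
    rw [sub_neg_eq_add, exp_neg]
    field_simp
    ring
  rw [hasSum_pnat_iff (f := fun n : ℕ => (-1 : ℝ) ^ n * exp (-(x * n)))]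
  simpa only [hterm, pow_zero, Nat.cast_zero, mul_zero, neg_zero, exp_zero, one_mul, hsum]
    using hasSum_geometric_of_norm_lt_one hr

lemma hasDerivAt_mul_exp_neg_mul (b c x : ℝ) :
    HasDerivAt (fun y => b * exp (-(y * c))) (b * -c * exp (-(x * c))) x := by
  have := (((hasDerivAt_id x).mul_const c).fun_neg.exp).const_mul b
  simpa only [id, one_mul, mul_assoc, mul_comm (exp _)] using this

lemma hasDerivAt_tsum_mul_exp_neg_mul {b : ℕ+ → ℝ} {C : ℝ} {n : ℕ}
    (hb : ∀ P, |b P| ≤ C * ((P : ℕ) : ℝ) ^ n) {x : ℝ} (hx : 0 < x) :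
    HasDerivAt (fun y => ∑' P : ℕ+, b P * exp (-(y * (P : ℕ))))
      (∑' P : ℕ+, b P * -((P : ℕ) : ℝ) * exp (-(x * (P : ℕ)))) x := by
  have hb' (P : ℕ+) : |b P * -((P : ℕ) : ℝ)| ≤ C * ((P : ℕ) : ℝ) ^ (n + 1) := by
    rw [abs_mul, abs_neg, Nat.abs_cast, pow_succ, ← mul_assoc]
    exact mul_le_mul_of_nonneg_right (hb P) (Nat.cast_nonneg _)
  have hbound (P : ℕ+) (y : ℝ) (hy : y ∈ Set.Ioi (x / 2)) :
      ‖b P * -((P : ℕ) : ℝ) * exp (-(y * (P : ℕ)))‖ ≤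
        C * (((P : ℕ) : ℝ) ^ (n + 1) * exp (-(x / 2 * (P : ℕ)))) := by
    rw [norm_mul, norm_of_nonneg (exp_nonneg _), ← mul_assoc]
    refine mul_le_mul (hb' P) (exp_le_exp.2 ?_) (exp_nonneg _) ((abs_nonneg _).trans (hb' P))
    exact neg_le_neg (mul_le_mul_of_nonneg_right (le_of_lt hy) (Nat.cast_nonneg _))
  have hxI : x ∈ Set.Ioi (x / 2) := half_lt_self hx
  exact hasDerivAt_tsum_of_isPreconnected
    ((summable_pnat_pow_mul_exp_neg_mul (n + 1) (half_pos hx)).mul_left C)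
    isOpen_Ioi isPreconnected_Ioi (fun P y _ => hasDerivAt_mul_exp_neg_mul (b P) _ y)
    hbound hxI (summable_pnat_mul_exp_neg_mul hb hx) hxI

lemma iteratedDeriv_eq_tsum_mul_exp_neg_mul {F : ℝ → ℝ} {a : ℕ+ → ℝ} {C : ℝ}
    (ha : ∀ P, |a P| ≤ C)
    (hF : ∀ y, 0 < y → F y = ∑' P : ℕ+, a P * exp (-(y * (P : ℕ)))) (n : ℕ) {x : ℝ}
    (hx : 0 < x) :
    iteratedDeriv n F x = ∑' P : ℕ+, a P * (-((P : ℕ) : ℝ)) ^ n * exp (-(x * (P : ℕ))) := by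
  induction n generalizing x with
  | zero => simpa using hF x hx
  | succ n ih =>
    have hb (P : ℕ+) : |a P * (-((P : ℕ) : ℝ)) ^ n| ≤ C * ((P : ℕ) : ℝ) ^ n := by
      rw [abs_mul, abs_pow, abs_neg, Nat.abs_cast]
      exact mul_le_mul_of_nonneg_right (ha P) (by positivity)
    have hev : iteratedDeriv n F =ᶠ[nhds x]
        fun y => ∑' P : ℕ+, a P * (-((P : ℕ) : ℝ)) ^ n * exp (-(y * (P : ℕ))) :=
      Filter.eventually_of_mem (Ioi_mem_nhds hx) fun y hy => ih hy
    rw [iteratedDeriv_succ, hev.deriv_eq, (hasDerivAt_tsum_mul_exp_neg_mul hb hx).deriv]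
    simp only [pow_succ, mul_assoc]

/-- For every `k : ℕ` and real `λ > 0`, the `(2k)`-th derivative of
`x ↦ -1/(e^x + 1)` at `λ` equals the convergent alternating series
`Σ_{P≥1} (-1)^P P^{2k} e^{-λP}`. -/
theorem iteratedDeriv_neg_inv_exp_add_one_eq_tsum
    (k : ℕ) (l : ℝ) (hl : 0 < l) :
    Summable (fun P : ℕ+ =>
        (-1 : ℝ) ^ (P : ℕ) * ((P : ℕ) : ℝ) ^ (2 * k) * Real.exp (-(l * ((P : ℕ) : ℝ))))
      ∧
    iteratedDeriv (2 * k) (fun x : ℝ => -(Real.exp x + 1)⁻¹) l =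
      ∑' P : ℕ+,
        (-1 : ℝ) ^ (P : ℕ) * ((P : ℕ) : ℝ) ^ (2 * k) * Real.exp (-(l * ((P : ℕ) : ℝ))) := by
  have hsign (P : ℕ+) : |(-1 : ℝ) ^ (P : ℕ)| ≤ 1 := by simp
  have hsign_pow (P : ℕ+) :
      |(-1 : ℝ) ^ (P : ℕ) * ((P : ℕ) : ℝ) ^ (2 * k)| ≤ 1 * ((P : ℕ) : ℝ) ^ (2 * k) := by
    simp
  refine ⟨summable_pnat_mul_exp_neg_mul hsign_pow hl, ?_⟩
  rw [iteratedDeriv_eq_tsum_mul_exp_neg_mul hsign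
    (fun y hy => (hasSum_pnat_neg_one_pow_mul_exp_neg_mul hy).tsum_eq.symm) (2 * k) hl]
  simp only [(even_two_mul k).neg_pow]
end

section
/- For every natural number d there exist integers q̃₁, …, q̃_{d+1} such that for all real λ ≠ 0: (e^λ − e^{−λ})^{−1} · iteratedDeriv (2d+1) (fun x => 2/(Real.exp x − Real.exp (−x))) λ = Σ_{j=1}^{d+1} q̃_j · (e^λ + e^{−λ}) / (e^λ − e^{−λ})^{2j+1}. -/
/-!
Since `2 / (e^x - e^{-x}) = 1 / sinh x`, we differentiate `u = csch x`, which satisfies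
`u' = -cosh x · u²` and `cosh² x · u² = 1 + u²`. Hence differentiation sends `u · P(u²)`
to `cosh x · u² · Q(u²)` with `Q = -P - 2XP'`, and `cosh x · u² · Q(u²)` back to
`u · R(u²)` with `R = -(1 + 2X)Q - 2X(1 + X)Q'`; the polynomials keep integer coefficients
and their degree grows by one every second derivative. Dividing the `(2d+1)`-th derivative
by `2 sinh` and rewriting `sinh`, `cosh` through exponentials only multiplies the `j`-th
coefficient by `2^(2j-1)`.
-/

open Polynomial Real Set

noncomputable section

def cschEven (P : ℤ[X]) (x : ℝ) : ℝ := (sinh x)⁻¹ * aeval ((sinh x)⁻¹ ^ 2) P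

def cschOdd (Q : ℤ[X]) (x : ℝ) : ℝ := cosh x * (sinh x)⁻¹ ^ 2 * aeval ((sinh x)⁻¹ ^ 2) Q

def cschEvenDeriv (P : ℤ[X]) : ℤ[X] := -P - 2 * (X * derivative P)

def cschOddDeriv (Q : ℤ[X]) : ℤ[X] := -(1 + 2 * X) * Q - 2 * (1 + X) * (X * derivative Q)

end

lemma hasDerivAt_inv_sinh {x : ℝ} (hx : x ≠ 0) :
    HasDerivAt (fun x => (sinh x)⁻¹) (-cosh x * (sinh x)⁻¹ ^ 2) x := by
  refine ((hasDerivAt_sinh x).fun_inv (sinh_ne_zero.2 hx)).congr_deriv ?_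
  field_simp

lemma hasDerivAt_aeval_inv_sinh_sq (P : ℤ[X]) {x : ℝ} (hx : x ≠ 0) :
    HasDerivAt (fun x => aeval ((sinh x)⁻¹ ^ 2) P)
      (-2 * cosh x * (sinh x)⁻¹ ^ 3 * aeval ((sinh x)⁻¹ ^ 2) (derivative P)) x := by
  refine ((P.hasDerivAt_aeval _).comp x ((hasDerivAt_inv_sinh hx).fun_pow 2)).congr_deriv ?_
  simp only [Nat.cast_ofNat]
  ring

lemma hasDerivAt_cschEven (P : ℤ[X]) {x : ℝ} (hx : x ≠ 0) :
    HasDerivAt (cschEven P) (cschOdd (cschEvenDeriv P) x) x := by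
  refine ((hasDerivAt_inv_sinh hx).fun_mul (hasDerivAt_aeval_inv_sinh_sq P hx)).congr_deriv ?_
  simp only [cschOdd, cschEvenDeriv, map_sub, map_neg, map_mul, map_ofNat, aeval_X]
  ring

lemma hasDerivAt_cschOdd (Q : ℤ[X]) {x : ℝ} (hx : x ≠ 0) :
    HasDerivAt (cschOdd Q) (cschEven (cschOddDeriv Q) x) x := by
  refine (((hasDerivAt_cosh x).fun_mul ((hasDerivAt_inv_sinh hx).fun_pow 2)).fun_mul
    (hasDerivAt_aeval_inv_sinh_sq Q hx)).congr_deriv ?_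
  have hu : sinh x * (sinh x)⁻¹ = 1 := mul_inv_cancel₀ (sinh_ne_zero.2 hx)
  simp only [cschEven, cschOddDeriv, map_sub, map_neg, map_mul, map_add, map_one, map_ofNat,
    aeval_X]
  set u := (sinh x)⁻¹
  set A := aeval (u ^ 2) Q
  set B := aeval (u ^ 2) (derivative Q)
  linear_combination (-2 * u ^ 3 * A - 2 * u ^ 5 * B) * cosh_sq x
    + (-u * A * (1 + 2 * sinh x * u) - 2 * u ^ 3 * B * (sinh x * u + 1)) * hu

lemma natDegree_X_mul_derivative_le {R : Type*} [Semiring R] (p : R[X]) :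
    (X * derivative p).natDegree ≤ p.natDegree := by
  by_cases hp : p.natDegree = 0
  · rw [eq_C_of_natDegree_eq_zero hp, derivative_C, mul_zero, natDegree_zero]
    exact Nat.zero_le _
  · have := natDegree_derivative_lt hp
    have := natDegree_X_le (R := R)
    exact natDegree_mul_le.trans (by omega)

lemma natDegree_cschEvenDeriv_le {P : ℤ[X]} {n : ℕ} (hP : P.natDegree ≤ n) :
    (cschEvenDeriv P).natDegree ≤ n := by
  unfold cschEvenDeriv
  refine (natDegree_sub_le _ _).trans (max_le (by rwa [natDegree_neg]) ?_)
  simpa using natDegree_mul_le_of_le (natDegree_ofNat (R := ℤ) 2).le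
    ((natDegree_X_mul_derivative_le P).trans hP)

lemma natDegree_cschOddDeriv_le {Q : ℤ[X]} {n : ℕ} (hQ : Q.natDegree ≤ n) :
    (cschOddDeriv Q).natDegree ≤ n + 1 := by
  have h1 : (1 + 2 * X : ℤ[X]).natDegree ≤ 1 := by compute_degree
  have h2 : (2 * (1 + X) : ℤ[X]).natDegree ≤ 1 := by compute_degree
  unfold cschOddDeriv
  refine (natDegree_sub_le _ _).trans (max_le ?_ ?_)
  · rw [neg_mul, natDegree_neg, add_comm n]
    exact natDegree_mul_le_of_le h1 hQ
  · rw [add_comm n]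
    exact natDegree_mul_le_of_le h2 ((natDegree_X_mul_derivative_le Q).trans hQ)

lemma eqOn_iteratedDeriv_succ {𝕜 F : Type*} [NontriviallyNormedField 𝕜] [NormedAddCommGroup F]
    [NormedSpace 𝕜 F] {f g g' : 𝕜 → F} {s : Set 𝕜} {n : ℕ} (hs : IsOpen s)
    (h : EqOn (iteratedDeriv n f) g s) (hg : ∀ x ∈ s, HasDerivAt g (g' x) x) :
    EqOn (iteratedDeriv (n + 1) f) g' s := fun x hx => by
  rw [iteratedDeriv_succ]
  exact ((hg x hx).congr_of_eventuallyEq (h.eventuallyEq_of_mem (hs.mem_nhds hx))).deriv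

lemma exists_eqOn_iteratedDeriv_even_inv_sinh (k : ℕ) :
    ∃ P : ℤ[X], P.natDegree ≤ k ∧
      EqOn (iteratedDeriv (2 * k) fun x => (sinh x)⁻¹) (cschEven P) {0}ᶜ := by
  induction k with
  | zero => exact ⟨1, by simp, fun x _ => by simp [cschEven]⟩
  | succ k ih =>
    obtain ⟨P, hdeg, hP⟩ := ih
    have hodd := eqOn_iteratedDeriv_succ isOpen_compl_singleton hP
      fun x hx => hasDerivAt_cschEven P hx
    refine ⟨cschOddDeriv (cschEvenDeriv P),
      natDegree_cschOddDeriv_le (natDegree_cschEvenDeriv_le hdeg), ?_⟩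
    exact eqOn_iteratedDeriv_succ isOpen_compl_singleton hodd
      fun x hx => hasDerivAt_cschOdd _ hx

lemma exists_eqOn_iteratedDeriv_odd_inv_sinh (k : ℕ) :
    ∃ Q : ℤ[X], Q.natDegree ≤ k ∧
      EqOn (iteratedDeriv (2 * k + 1) fun x => (sinh x)⁻¹) (cschOdd Q) {0}ᶜ := by
  obtain ⟨P, hdeg, hP⟩ := exists_eqOn_iteratedDeriv_even_inv_sinh k
  exact ⟨cschEvenDeriv P, natDegree_cschEvenDeriv_le hdeg,
    eqOn_iteratedDeriv_succ isOpen_compl_singleton hP fun x hx => hasDerivAt_cschEven P hx⟩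

/-- For every `d : ℕ` there exist integers `q̃₁, …, q̃_{d+1}` such that for all
real `λ ≠ 0`:
`(e^λ - e^{-λ})⁻¹ · (d/dλ)^{2d+1} (2/(e^λ - e^{-λ}))
  = Σ_{j=1}^{d+1} q̃_j (e^λ + e^{-λ})/(e^λ - e^{-λ})^{2j+1}`. -/
theorem antisymmetric_time_combination_integral_coeffs
    (d : ℕ) :
    ∃ q : ℕ → ℤ, ∀ l : ℝ, l ≠ 0 →
      (Real.exp l - Real.exp (-l))⁻¹ *
          iteratedDeriv (2 * d + 1)
            (fun x : ℝ => 2 / (Real.exp x - Real.exp (-x))) l =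
        ∑ j ∈ Finset.Icc 1 (d + 1),
          (q j : ℝ) * (Real.exp l + Real.exp (-l)) /
            (Real.exp l - Real.exp (-l)) ^ (2 * j + 1) := by
  have hsinh (x : ℝ) : Real.exp x - Real.exp (-x) = 2 * sinh x := by rw [sinh_eq]; ring
  have hcosh (x : ℝ) : Real.exp x + Real.exp (-x) = 2 * cosh x := by rw [cosh_eq]; ring
  obtain ⟨Q, hdeg, hQ⟩ := exists_eqOn_iteratedDeriv_odd_inv_sinh d
  have hf : (fun x => 2 / (Real.exp x - Real.exp (-x))) = fun x => (sinh x)⁻¹ :=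
    funext fun x => by rw [hsinh, div_mul_cancel_left₀ (two_ne_zero' ℝ)]
  refine ⟨fun j => 2 ^ (2 * j - 1) * Q.coeff (j - 1), fun l hl => ?_⟩
  rw [hf, hQ hl, hsinh, hcosh, cschOdd, aeval_eq_sum_range' (Nat.lt_succ_of_le hdeg),
    Finset.mul_sum, Finset.mul_sum, ← Finset.Ico_add_one_right_eq_Icc,
    Finset.sum_Ico_eq_sum_range, Nat.add_sub_cancel]
  refine Finset.sum_congr rfl fun i _ => ?_
  dsimp only
  rw [zsmul_eq_mul, show 2 * (1 + i) - 1 = 2 * i + 1 by omega, Nat.add_sub_cancel_left]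
  push_cast
  simp only [← pow_mul, inv_pow]
  field_simp
  ring
end
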